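/- arXiv:2411.14690 — 3 statements merged into one kernel-verified Lean document; each statement's English description precedes it below -/
import Mathlib

section
/- Suppose ρ is bounded (there exists M such that |ρ(r)| ≤ M for all r ≥ 0). If x, x' ∈ ℝ^d satisfy f(x) > 0, f(x') > 0 and f(x) ≠ f(x'), then k_α(x, x') → 0 as α → ∞. (Part (b), case (i) of Proposition 3: when both layer values are positive and distinct, the prefactor tends to zero while ρ stays bounded.) -/
/-!
Writing `u = α f x`, `v = α f x'`, the identity `exp u + exp v = 2 exp ((u + v) / 2) cosh ((u - v) / 2)`
turns the prefactor `2^(d/2) (H H')^(d/4) / (H + H')^(d/2)` into `cosh (α (f x - f x') / 2) ^ (-d/2)`,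
which tends to `0` because `f x ≠ f x'`; the factor `ρ (…)` stays bounded by `M`.
-/

open Filter Topology Real

namespace Real

theorem exp_add_exp_eq_two_mul_exp_mul_cosh (u v : ℝ) :
    exp u + exp v = 2 * exp ((u + v) / 2) * cosh ((u - v) / 2) := by
  calc exp u + exp v = exp ((u + v) / 2 + (u - v) / 2) + exp ((u + v) / 2 + -((u - v) / 2)) := by
        ring_nf
    _ = 2 * exp ((u + v) / 2) * cosh ((u - v) / 2) := by rw [exp_add, exp_add, cosh_eq]; ring

theorem tendsto_cosh_atTop : Tendsto cosh atTop atTop := by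
  refine tendsto_atTop_mono (fun x => ?_) (tendsto_exp_atTop.atTop_div_const two_pos)
  rw [cosh_eq]
  gcongr
  linarith [exp_pos (-x)]

theorem tendsto_cosh_mul_atTop {c : ℝ} (hc : c ≠ 0) :
    Tendsto (fun α => cosh (α * c)) atTop atTop := by
  simp_rw [← cosh_abs (_ * c), abs_mul]
  exact tendsto_cosh_atTop.comp (tendsto_abs_atTop_atTop.atTop_mul_const (abs_pos.2 hc))

end Real

theorem two_rpow_mul_exp_mul_exp_rpow_div_exp_add_exp_rpow (p u v : ℝ) :
    2 ^ p * (exp u * exp v) ^ (p / 2) / (exp u + exp v) ^ p = cosh ((u - v) / 2) ^ (-p) := by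
  have hgeom : (exp u * exp v) ^ (p / 2) = exp ((u + v) / 2) ^ p := by
    rw [← exp_add, ← exp_mul, ← exp_mul]
    ring_nf
  rw [hgeom, exp_add_exp_eq_two_mul_exp_mul_cosh,
    mul_rpow (by positivity) (cosh_pos _).le, mul_rpow zero_le_two (exp_pos _).le,
    rpow_neg (cosh_pos _).le]
  have : 0 < (2 : ℝ) ^ p * exp ((u + v) / 2) ^ p := by positivity
  field_simp

theorem tendsto_two_rpow_mul_exp_mul_exp_rpow_div_exp_add_exp_rpow {p a b : ℝ} (hp : 0 < p)
    (hab : a ≠ b) :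
    Tendsto (fun α => 2 ^ p * (exp (α * a) * exp (α * b)) ^ (p / 2) /
      (exp (α * a) + exp (α * b)) ^ p) atTop (𝓝 0) := by
  simp_rw [two_rpow_mul_exp_mul_exp_rpow_div_exp_add_exp_rpow, ← mul_sub, mul_div_assoc]
  exact (tendsto_rpow_neg_atTop hp).comp
    (tendsto_cosh_mul_atTop (div_ne_zero (sub_ne_zero.2 hab) two_ne_zero))

theorem paciorek_kernel_tendsto_zero_pos_pos_general
    (d : ℕ) (hd : 1 ≤ d) (σ2 : ℝ) (ρ : ℝ → ℝ)
    (M : ℝ) (hρ : ∀ r : ℝ, 0 ≤ r → |ρ r| ≤ M)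
    (f : EuclideanSpace ℝ (Fin d) → ℝ)
    (H : ℝ → EuclideanSpace ℝ (Fin d) → ℝ)
    (hH : ∀ (α : ℝ) (x : EuclideanSpace ℝ (Fin d)), H α x = Real.exp (α * f x))
    (k : ℝ → EuclideanSpace ℝ (Fin d) → EuclideanSpace ℝ (Fin d) → ℝ)
    (hk : ∀ (α : ℝ) (x x' : EuclideanSpace ℝ (Fin d)),
      k α x x' = σ2 * ((2:ℝ) ^ ((d:ℝ)/2) * (H α x * H α x') ^ ((d:ℝ)/4) /
          (H α x + H α x') ^ ((d:ℝ)/2)) *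
        ρ (‖x - x'‖ / Real.sqrt ((H α x + H α x') / 2)))
    (x x' : EuclideanSpace ℝ (Fin d))
    (hne : f x ≠ f x') :
    Filter.Tendsto (fun α : ℝ => k α x x') Filter.atTop (nhds 0) := by
  have hd2 : (0 : ℝ) < d / 2 := div_pos (Nat.cast_pos.2 hd) two_pos
  have hprefactor :=
    (tendsto_two_rpow_mul_exp_mul_exp_rpow_div_exp_add_exp_rpow hd2 hne).const_mul σ2
  have hbounded : IsBoundedUnder (· ≤ ·) atTop
      ((‖·‖) ∘ fun α => ρ (‖x - x'‖ / √((H α x + H α x') / 2))) :=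
    isBoundedUnder_of ⟨M, fun α => hρ _ (by positivity)⟩
  rw [mul_zero] at hprefactor
  simpa only [hk, hH, div_div, show (2 : ℝ) * 2 = 4 by norm_num] using
    hprefactor.zero_mul_isBoundedUnder_le hbounded

/-- Proposition 3(b), case (i): if `ρ` is bounded and the previous-layer values
`f x > 0`, `f x' > 0` are distinct, then the Paciorek-type kernel with
length-scale function `H_α(x) = exp (α * f x)` tends to `0` as `α → ∞`. -/
theorem paciorek_kernel_tendsto_zero_pos_pos
    (d : ℕ) (hd : 1 ≤ d) (σ2 : ℝ) (hσ2 : 0 < σ2) (ρ : ℝ → ℝ)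
    (M : ℝ) (hρ : ∀ r : ℝ, 0 ≤ r → |ρ r| ≤ M)
    (f : EuclideanSpace ℝ (Fin d) → ℝ)
    (H : ℝ → EuclideanSpace ℝ (Fin d) → ℝ)
    (hH : ∀ (α : ℝ) (x : EuclideanSpace ℝ (Fin d)), H α x = Real.exp (α * f x))
    (k : ℝ → EuclideanSpace ℝ (Fin d) → EuclideanSpace ℝ (Fin d) → ℝ)
    (hk : ∀ (α : ℝ) (x x' : EuclideanSpace ℝ (Fin d)),
      k α x x' = σ2 * ((2:ℝ) ^ ((d:ℝ)/2) * (H α x * H α x') ^ ((d:ℝ)/4) /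
          (H α x + H α x') ^ ((d:ℝ)/2)) *
        ρ (‖x - x'‖ / Real.sqrt ((H α x + H α x') / 2)))
    (x x' : EuclideanSpace ℝ (Fin d))
    (hfx : 0 < f x) (hfx' : 0 < f x') (hne : f x ≠ f x') :
    Filter.Tendsto (fun α : ℝ => k α x x') Filter.atTop (nhds 0) :=
  paciorek_kernel_tendsto_zero_pos_pos_general d hd σ2 ρ M hρ f H hH k hk x x' hne
end

section
/- Suppose ρ is bounded (there exists M such that |ρ(r)| ≤ M for all r ≥ 0). If x, x' ∈ ℝ^d satisfy f(x) > 0 and f(x') < 0, then k_α(x, x') → 0 as α → ∞. (Part (b), case (ii) of Proposition 3: when the layer values have opposite signs, the prefactor tends to zero while ρ stays bounded.) -/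
/-!
With `a = H_α(x)` and `b = H_α(x')`, the prefactor `2^{d/2} (ab)^{d/4} / (a+b)^{d/2}` is at most
`2^{d/2} (b/a)^{d/4}`, and `b/a = exp (α (f x' - f x)) → 0` when `f x' < f x`.
The correlation factor stays bounded, so the kernel tends to `0`.
-/

open Filter Topology Real

noncomputable section

def paciorekPrefactor (d a b : ℝ) : ℝ :=
  2 ^ (d / 2) * (a * b) ^ (d / 4) / (a + b) ^ (d / 2)

lemma paciorekPrefactor_nonneg {d a b : ℝ} (ha : 0 ≤ a) (hb : 0 ≤ b) :
    0 ≤ paciorekPrefactor d a b := by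
  unfold paciorekPrefactor
  positivity

lemma paciorekPrefactor_le {d a b : ℝ} (hd : 0 ≤ d) (ha : 0 < a) (hb : 0 ≤ b) :
    paciorekPrefactor d a b ≤ 2 ^ (d / 2) * (b / a) ^ (d / 4) := by
  have h_sum : a ^ (d / 2) ≤ (a + b) ^ (d / 2) :=
    rpow_le_rpow ha.le (by linarith) (by positivity)
  have h_ratio : (a * b) ^ (d / 4) / a ^ (d / 2) = (b / a) ^ (d / 4) := by
    rw [div_rpow hb ha.le, mul_rpow ha.le hb, show d / 2 = d / 4 + d / 4 by ring,
      rpow_add ha]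
    field_simp
  calc paciorekPrefactor d a b
      ≤ 2 ^ (d / 2) * (a * b) ^ (d / 4) / a ^ (d / 2) :=
        div_le_div_of_nonneg_left (by positivity) (by positivity) h_sum
    _ = 2 ^ (d / 2) * (b / a) ^ (d / 4) := by rw [mul_div_assoc, h_ratio]

lemma tendsto_paciorekPrefactor_zero {ι : Type*} {l : Filter ι} {d : ℝ} (hd : 0 < d)
    {a b : ι → ℝ} (ha : ∀ i, 0 < a i) (hb : ∀ i, 0 ≤ b i)
    (h_ratio : Tendsto (fun i => b i / a i) l (𝓝 0)) :
    Tendsto (fun i => paciorekPrefactor d (a i) (b i)) l (𝓝 0) := by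
  have h_bound : Tendsto (fun i => 2 ^ (d / 2) * (b i / a i) ^ (d / 4)) l (𝓝 0) := by
    have h := (h_ratio.rpow_const (p := d / 4) (Or.inr (by positivity))).const_mul
      ((2 : ℝ) ^ (d / 2))
    rwa [zero_rpow (by positivity), mul_zero] at h
  exact squeeze_zero (fun i => paciorekPrefactor_nonneg (ha i).le (hb i))
    (fun i => paciorekPrefactor_le hd.le (ha i) (hb i)) h_bound

lemma tendsto_exp_mul_div_exp_mul_atTop {p q : ℝ} (hqp : q < p) :
    Tendsto (fun t => exp (t * q) / exp (t * p)) atTop (𝓝 0) := by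
  simp_rw [← exp_sub, ← mul_sub]
  exact tendsto_exp_atBot.comp (tendsto_id.atTop_mul_const_of_neg (by linarith))

end

theorem paciorek_kernel_tendsto_zero_pos_neg_general
    (d : ℕ) (hd : 1 ≤ d) (σ2 : ℝ) (ρ : ℝ → ℝ)
    (M : ℝ) (hρ : ∀ r : ℝ, 0 ≤ r → |ρ r| ≤ M)
    (f : EuclideanSpace ℝ (Fin d) → ℝ)
    (H : ℝ → EuclideanSpace ℝ (Fin d) → ℝ)
    (hH : ∀ (α : ℝ) (x : EuclideanSpace ℝ (Fin d)), H α x = Real.exp (α * f x))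
    (k : ℝ → EuclideanSpace ℝ (Fin d) → EuclideanSpace ℝ (Fin d) → ℝ)
    (hk : ∀ (α : ℝ) (x x' : EuclideanSpace ℝ (Fin d)),
      k α x x' = σ2 * ((2:ℝ) ^ ((d:ℝ)/2) * (H α x * H α x') ^ ((d:ℝ)/4) /
          (H α x + H α x') ^ ((d:ℝ)/2)) *
        ρ (‖x - x'‖ / Real.sqrt ((H α x + H α x') / 2)))
    (x x' : EuclideanSpace ℝ (Fin d))
    (hfx : 0 < f x) (hfx' : f x' < 0) :
    Filter.Tendsto (fun α : ℝ => k α x x') Filter.atTop (nhds 0) := by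
  have hH_pos : ∀ α y, 0 < H α y := fun α y => hH α y ▸ exp_pos _
  have h_prefactor : Tendsto (fun α => paciorekPrefactor d (H α x) (H α x')) atTop (𝓝 0) := by
    refine tendsto_paciorekPrefactor_zero (by exact_mod_cast hd) (fun α => hH_pos α x)
      (fun α => (hH_pos α x').le) ?_
    simpa only [hH] using tendsto_exp_mul_div_exp_mul_atTop (hfx'.trans hfx)
  have h_corr_bdd : IsBoundedUnder (· ≤ ·) atTop
      (fun α => ‖ρ (‖x - x'‖ / √((H α x + H α x') / 2))‖) :=
    isBoundedUnder_of ⟨M, fun α => hρ _ (by positivity)⟩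
  have h_scaled := h_prefactor.const_mul σ2
  rw [mul_zero] at h_scaled
  simp only [hk]
  exact h_scaled.zero_mul_isBoundedUnder_le h_corr_bdd

/-- Proposition 3(b), case (ii): if `ρ` is bounded and the previous-layer values
`f x > 0`, `f x' < 0` have opposite signs, then the Paciorek-type kernel with
length-scale function `H_α(x) = exp (α * f x)` tends to `0` as `α → ∞`. -/
theorem paciorek_kernel_tendsto_zero_pos_neg
    (d : ℕ) (hd : 1 ≤ d) (σ2 : ℝ) (hσ2 : 0 < σ2) (ρ : ℝ → ℝ)
    (M : ℝ) (hρ : ∀ r : ℝ, 0 ≤ r → |ρ r| ≤ M)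
    (f : EuclideanSpace ℝ (Fin d) → ℝ)
    (H : ℝ → EuclideanSpace ℝ (Fin d) → ℝ)
    (hH : ∀ (α : ℝ) (x : EuclideanSpace ℝ (Fin d)), H α x = Real.exp (α * f x))
    (k : ℝ → EuclideanSpace ℝ (Fin d) → EuclideanSpace ℝ (Fin d) → ℝ)
    (hk : ∀ (α : ℝ) (x x' : EuclideanSpace ℝ (Fin d)),
      k α x x' = σ2 * ((2:ℝ) ^ ((d:ℝ)/2) * (H α x * H α x') ^ ((d:ℝ)/4) /
          (H α x + H α x') ^ ((d:ℝ)/2)) *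
        ρ (‖x - x'‖ / Real.sqrt ((H α x + H α x') / 2)))
    (x x' : EuclideanSpace ℝ (Fin d))
    (hfx : 0 < f x) (hfx' : f x' < 0) :
    Filter.Tendsto (fun α : ℝ => k α x x') Filter.atTop (nhds 0) :=
  paciorek_kernel_tendsto_zero_pos_neg_general d hd σ2 ρ M hρ f H hH k hk x x' hfx hfx'
end

section
/- Suppose ρ is bounded (there exists M such that |ρ(r)| ≤ M for all r ≥ 0) and ρ(r) → 0 as r → ∞. If x, x' ∈ ℝ^d satisfy x ≠ x', f(x) < 0 and f(x') < 0, then k_α(x, x') → 0 as α → ∞. (Part (b), case (iii) of Proposition 3: when both layer values are negative, the quadratic-form argument tends to infinity, so ρ tends to 0 while the prefactor stays bounded.) -/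
/-!
The prefactor of the kernel is `(2√(H x H x') / (H x + H x'))^(d/2)`, a power of the ratio of
the geometric to the arithmetic mean, hence lies in `[0, 1]`. When `f x, f x' < 0` both length
scales `H_α` tend to `0`, so the argument `‖x - x'‖ / √((H x + H x') / 2)` of `ρ` tends to `∞`
and the kernel is squeezed to `0`.
-/

open Filter Topology Real

lemma paciorek_prefactor_eq_rpow {a b : ℝ} (ha : 0 < a) (hb : 0 < b) (p : ℝ) :
    (2 : ℝ) ^ (p / 2) * (a * b) ^ (p / 4) / (a + b) ^ (p / 2) =
      (2 * √(a * b) / (a + b)) ^ (p / 2) := by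
  have hab : 0 ≤ a * b := by positivity
  rw [div_rpow (by positivity) (by positivity), mul_rpow zero_le_two (sqrt_nonneg _),
    sqrt_eq_rpow, ← rpow_mul hab]
  ring_nf

lemma abs_paciorek_prefactor_le_one {a b p : ℝ} (ha : 0 < a) (hb : 0 < b) (hp : 0 ≤ p) :
    |(2 : ℝ) ^ (p / 2) * (a * b) ^ (p / 4) / (a + b) ^ (p / 2)| ≤ 1 := by
  have hgm_le_am : 2 * √(a * b) ≤ a + b := by
    rw [sqrt_mul ha.le]
    nlinarith [sq_nonneg (√a - √b), sq_sqrt ha.le, sq_sqrt hb.le]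
  rw [paciorek_prefactor_eq_rpow ha hb, abs_of_nonneg (by positivity)]
  exact rpow_le_one (by positivity) ((div_le_one (by positivity)).2 hgm_le_am) (by positivity)

lemma tendsto_exp_mul_nhdsGT_zero {c : ℝ} (hc : c < 0) :
    Tendsto (fun α : ℝ => exp (α * c)) atTop (𝓝[>] 0) :=
  tendsto_exp_atBot_nhdsGT.comp (tendsto_id.atTop_mul_const_of_neg hc)

lemma Filter.Tendsto.const_div_sqrt_atTop {ι : Type*} {l : Filter ι} {g : ι → ℝ} {r : ℝ}
    (hr : 0 < r) (hg : Tendsto g l (𝓝[>] 0)) :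
    Tendsto (fun t => r / √(g t)) l atTop := by
  rw [tendsto_nhdsWithin_iff] at hg
  have hsqrt : Tendsto (fun t => √(g t)) l (𝓝[>] 0) := by
    refine tendsto_nhdsWithin_iff.2 ⟨?_, hg.2.mono fun t ht => sqrt_pos.2 ht⟩
    simpa using hg.1.sqrt
  simpa [div_eq_mul_inv] using hsqrt.inv_tendsto_nhdsGT_zero.const_mul_atTop hr

theorem paciorek_kernel_tendsto_zero_neg_neg_general
    (d : ℕ) (σ2 : ℝ) (ρ : ℝ → ℝ)
    (hρ0 : Filter.Tendsto ρ Filter.atTop (nhds 0))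
    (f : EuclideanSpace ℝ (Fin d) → ℝ)
    (H : ℝ → EuclideanSpace ℝ (Fin d) → ℝ)
    (hH : ∀ (α : ℝ) (x : EuclideanSpace ℝ (Fin d)), H α x = Real.exp (α * f x))
    (k : ℝ → EuclideanSpace ℝ (Fin d) → EuclideanSpace ℝ (Fin d) → ℝ)
    (hk : ∀ (α : ℝ) (x x' : EuclideanSpace ℝ (Fin d)),
      k α x x' = σ2 * ((2:ℝ) ^ ((d:ℝ)/2) * (H α x * H α x') ^ ((d:ℝ)/4) /
          (H α x + H α x') ^ ((d:ℝ)/2)) *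
        ρ (‖x - x'‖ / Real.sqrt ((H α x + H α x') / 2)))
    (x x' : EuclideanSpace ℝ (Fin d))
    (hxx' : x ≠ x') (hfx : f x < 0) (hfx' : f x' < 0) :
    Filter.Tendsto (fun α : ℝ => k α x x') Filter.atTop (nhds 0) := by
  have hHpos (α : ℝ) (y : EuclideanSpace ℝ (Fin d)) : 0 < H α y := by
    rw [hH]; exact exp_pos _
  have hH0 {y} (hy : f y < 0) : Tendsto (fun α => H α y) atTop (𝓝 0) := by
    simpa only [hH] using (tendsto_exp_mul_nhdsGT_zero hy).mono_right nhdsWithin_le_nhds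
  have hmean : Tendsto (fun α => (H α x + H α x') / 2) atTop (𝓝[>] 0) :=
    tendsto_nhdsWithin_iff.2
      ⟨by simpa using ((hH0 hfx).add (hH0 hfx')).div_const 2,
        .of_forall fun α => half_pos (add_pos (hHpos α x) (hHpos α x'))⟩
  have hcorr := hρ0.comp (hmean.const_div_sqrt_atTop (norm_pos_iff.2 (sub_ne_zero.2 hxx')))
  simp_rw [hk]
  refine bdd_le_mul_tendsto_zero' |σ2| (.of_forall fun α => ?_) hcorr
  rw [abs_mul]
  exact mul_le_of_le_one_right (abs_nonneg _)
    (abs_paciorek_prefactor_le_one (hHpos α x) (hHpos α x') d.cast_nonneg)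

/-- Proposition 3(b), case (iii): if `ρ` is bounded and `ρ(r) → 0` as `r → ∞`,
and `x ≠ x'` with `f x < 0`, `f x' < 0`, then the Paciorek-type kernel with
length-scale function `H_α(x) = exp (α * f x)` tends to `0` as `α → ∞`. -/
theorem paciorek_kernel_tendsto_zero_neg_neg
    (d : ℕ) (hd : 1 ≤ d) (σ2 : ℝ) (hσ2 : 0 < σ2) (ρ : ℝ → ℝ)
    (M : ℝ) (hρ : ∀ r : ℝ, 0 ≤ r → |ρ r| ≤ M)
    (hρ0 : Filter.Tendsto ρ Filter.atTop (nhds 0))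
    (f : EuclideanSpace ℝ (Fin d) → ℝ)
    (H : ℝ → EuclideanSpace ℝ (Fin d) → ℝ)
    (hH : ∀ (α : ℝ) (x : EuclideanSpace ℝ (Fin d)), H α x = Real.exp (α * f x))
    (k : ℝ → EuclideanSpace ℝ (Fin d) → EuclideanSpace ℝ (Fin d) → ℝ)
    (hk : ∀ (α : ℝ) (x x' : EuclideanSpace ℝ (Fin d)),
      k α x x' = σ2 * ((2:ℝ) ^ ((d:ℝ)/2) * (H α x * H α x') ^ ((d:ℝ)/4) /
          (H α x + H α x') ^ ((d:ℝ)/2)) *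
        ρ (‖x - x'‖ / Real.sqrt ((H α x + H α x') / 2)))
    (x x' : EuclideanSpace ℝ (Fin d))
    (hxx' : x ≠ x') (hfx : f x < 0) (hfx' : f x' < 0) :
    Filter.Tendsto (fun α : ℝ => k α x x') Filter.atTop (nhds 0) :=
  paciorek_kernel_tendsto_zero_neg_neg_general d σ2 ρ hρ0 f H hH k hk x x' hxx' hfx hfx'
end
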